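/- arXiv:2004.03394 — 9 statements merged into one kernel-verified Lean document; each statement's English description precedes it below -/
import Mathlib

section
/- Let (X,κ) be a digital image with the approximate fixed point property. Let x₀ ∉ X, let X' = X ∪ {x₀} carry an adjacency κ extending that of X, and suppose there is a κ-retraction r : X' → X (i.e., r is κ-continuous and r(x) = x for all x ∈ X) such that N*(X',κ,x₀) ⊆ N*(X',κ,r(x₀)). Then (X',κ) has the approximate fixed point property. -/
/-- A function `f : X → Y` is `(κ,λ)`-continuous between digital images. -/
def DigContinuous {X Y : Type*} (kappa : X → X → Prop) (lam : Y → Y → Prop)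
    (f : X → Y) : Prop :=
  ∀ x x', kappa x x' → f x = f x' ∨ lam (f x) (f x')

/-- `(X,κ)` has the approximate fixed point property. -/
def HasAFPP {X : Type*} (kappa : X → X → Prop) : Prop :=
  ∀ f : X → X, DigContinuous kappa kappa f → ∃ x, f x = x ∨ kappa (f x) x

/-- The normal product adjacency `NP(κ,λ)` on `X × Y`. -/
def NP {X Y : Type*} (kappa : X → X → Prop) (lam : Y → Y → Prop)
    (p q : X × Y) : Prop :=
  p ≠ q ∧ (kappa p.1 q.1 ∨ p.1 = q.1) ∧ (lam p.2 q.2 ∨ p.2 = q.2)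

/-- The `c_u`-adjacency on `ℤ^n`. -/
def cAdj (u : ℕ) {n : ℕ} (x y : Fin n → ℤ) : Prop :=
  x ≠ y ∧ (∀ i, |x i - y i| ≤ 1) ∧
    (Finset.univ.filter (fun i => x i ≠ y i)).card ≤ u

/-- If `(X,κ)` has the AFPP, where `X = X' \ {x₀}`, and there is a
κ-retraction `r : X' → X` with `N*(X',κ,x₀) ⊆ N*(X',κ,r x₀)`, then `(X',κ)` has the AFPP. -/
theorem afpp_of_add_point {X' : Type*} (kappa : X' → X' → Prop)
    (hirr : Irreflexive kappa) (hsym : Symmetric kappa)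
    (x₀ : X')
    (hAFPP : HasAFPP (fun a b : {x : X' // x ≠ x₀} => kappa a.val b.val))
    (r : X' → X')
    (hr_cont : DigContinuous kappa kappa r)
    (hr_into : ∀ x, r x ≠ x₀)
    (hr_retr : ∀ x, x ≠ x₀ → r x = x)
    (hN : ∀ y, (kappa y x₀ ∨ y = x₀) → (kappa y (r x₀) ∨ y = r x₀)) :
    HasAFPP kappa := by
  intro f hf
  -- the retracted map on X = X' \ {x₀}
  set g : {x : X' // x ≠ x₀} → {x : X' // x ≠ x₀} :=
    fun z => ⟨r (f z.val), hr_into _⟩ with hg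
  have hg_cont : DigContinuous (fun a b : {x : X' // x ≠ x₀} => kappa a.val b.val)
      (fun a b : {x : X' // x ≠ x₀} => kappa a.val b.val) g := by
    intro a b hab
    rcases hf a.val b.val hab with h | h
    · left; simp [hg, h]
    · rcases hr_cont _ _ h with h' | h'
      · left; simp [hg, h']
      · right; exact h'
  obtain ⟨x, hx⟩ := hAFPP g hg_cont
  have hx0rx0 : kappa x₀ (r x₀) := by
    rcases hN x₀ (Or.inr rfl) with h | h
    · exact h
    · exact absurd h.symm (hr_into x₀)
  by_cases hfx : f x.val = x₀
  · -- work near x₀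
    have hx' : r x₀ = x.val ∨ kappa (r x₀) x.val := by
      rcases hx with h | h
      · left; have := congrArg Subtype.val h; simpa [hg, hfx] using this
      · right; simpa [hg, hfx] using h
    rcases hx' with h | h
    · exact ⟨x.val, Or.inr (by rw [hfx, ← h]; exact hx0rx0)⟩
    · rcases hf (r x₀) x.val h with h' | h'
      · refine ⟨r x₀, Or.inr ?_⟩
        rw [h', hfx]; exact hx0rx0
      · rw [hfx] at h'
        rcases hN _ (Or.inl h') with h'' | h''
        · exact ⟨r x₀, Or.inr h''⟩
        · exact ⟨r x₀, Or.inl h''⟩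
  · -- r (f x) = f x
    have hr' : r (f x.val) = f x.val := hr_retr _ hfx
    rcases hx with h | h
    · refine ⟨x.val, Or.inl ?_⟩
      have := congrArg Subtype.val h; simpa [hg, hr'] using this
    · exact ⟨x.val, Or.inr (by have : kappa (r (f x.val)) x.val := h; rwa [hr'] at this)⟩
end

section
/- Every finite digital image (T,κ) whose adjacency graph is a tree (i.e., connected and acyclic) has the approximate fixed point property. -/
/-!
Induction on the number of vertices. A nontrivial finite tree has a leaf `v` with unique
neighbour `u`, and deleting `v` leaves a tree. Collapsing `v` onto `u` is a continuous retraction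
`r`, so `r ∘ f` restricted to the smaller tree has an approximate fixed point `a`. If `f a ≠ v`
then `a` is already an approximate fixed point of `f`; if `f a = v` then `a` is `u` or adjacent to
it, and continuity of `f` forces `u` itself to be an approximate fixed point.
-/

theorem DigContinuous.comp {X Y Z : Type*} {kappa : X → X → Prop} {lam : Y → Y → Prop}
    {mu : Z → Z → Prop} {g : Y → Z} {f : X → Y} (hg : DigContinuous lam mu g)
    (hf : DigContinuous kappa lam f) : DigContinuous kappa mu (g ∘ f) := by
  intro x x' hxx'
  rcases hf x x' hxx' with h | h
  · exact Or.inl (congrArg g h)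
  · exact hg _ _ h

namespace SimpleGraph

variable {V : Type*} {G : SimpleGraph V} {u v : V}

theorem digContinuous_induce_val (G : SimpleGraph V) (s : Set V) :
    DigContinuous (G.induce s).Adj G.Adj Subtype.val :=
  fun _ _ h => Or.inr h

open Classical in
noncomputable def collapseTo (hvu : G.Adj v u) (x : V) : ({v}ᶜ : Set V) :=
  if hx : x = v then ⟨u, hvu.ne.symm⟩ else ⟨x, hx⟩

theorem collapseTo_of_ne (hvu : G.Adj v u) {x : V} (hx : x ≠ v) :
    collapseTo hvu x = ⟨x, hx⟩ :=
  dif_neg hx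

theorem collapseTo_self (hvu : G.Adj v u) : (collapseTo hvu v : V) = u := by
  simp [collapseTo]

theorem digContinuous_collapseTo (hvu : G.Adj v u) (hleaf : ∀ w, G.Adj v w → w = u) :
    DigContinuous G.Adj (G.induce {v}ᶜ).Adj (collapseTo hvu) := by
  intro x y hxy
  by_cases hx : x = v
  · subst hx
    left
    ext
    rw [collapseTo_self, hleaf y hxy, collapseTo_of_ne hvu hvu.ne.symm]
  by_cases hy : y = v
  · subst hy
    left
    ext
    rw [collapseTo_self, hleaf x hxy.symm, collapseTo_of_ne hvu hvu.ne.symm]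
  right
  rw [collapseTo_of_ne hvu hx, collapseTo_of_ne hvu hy]
  exact hxy

theorem hasAFPP_of_leaf (hvu : G.Adj v u) (hleaf : ∀ w, G.Adj v w → w = u)
    (h : HasAFPP (G.induce {v}ᶜ).Adj) : HasAFPP G.Adj := by
  intro f hf
  obtain ⟨a, ha⟩ := h _ ((digContinuous_collapseTo hvu hleaf).comp
    (hf.comp (G.digContinuous_induce_val {v}ᶜ)))
  simp only [Function.comp_apply, Subtype.ext_iff, induce_adj] at ha
  by_cases hfa : f a = v
  · rw [hfa, collapseTo_self] at ha
    have hfu : f u = v ∨ G.Adj v (f u) := by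
      rcases ha with rfl | hua
      · exact Or.inl hfa
      · rcases hf a u hua.symm with h | h
        · exact Or.inl (h ▸ hfa)
        · exact Or.inr (hfa ▸ h)
    refine ⟨u, ?_⟩
    rcases hfu with h | h
    · exact Or.inr (h ▸ hvu)
    · exact Or.inl (hleaf _ h)
  · rw [collapseTo_of_ne hvu hfa] at ha
    exact ⟨a, ha⟩

theorem IsTree.hasAFPP [Finite V] (hG : G.IsTree) : HasAFPP G.Adj := by
  induction hn : Nat.card V generalizing V with
  | zero =>
    have := hG.connected.nonempty
    exact absurd hn Finite.card_pos.ne'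
  | succ n ih =>
    rcases subsingleton_or_nontrivial V with _ | _
    · intro f _
      exact ⟨hG.connected.nonempty.some, Or.inl (Subsingleton.elim _ _)⟩
    classical
    have := Fintype.ofFinite V
    obtain ⟨v, hv⟩ := hG.exists_vert_degree_one_of_nontrivial
    obtain ⟨u, hvu, hleaf⟩ := degree_eq_one_iff_existsUnique_adj.mp hv
    refine hasAFPP_of_leaf hvu hleaf (ih ⟨?_, hG.isAcyclic.induce _⟩ ?_)
    · exact hG.connected.induce_compl_singleton_of_degree_eq_one hv
    · rw [Nat.card_coe_set_eq, Set.ncard_compl, Set.ncard_singleton]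
      omega

end SimpleGraph

/-- A finite digital image whose adjacency graph is a tree has the AFPP. -/
theorem afpp_of_tree {T : Type*} [Fintype T] (kappa : T → T → Prop)
    (hsym : Symmetric kappa) (hirr : Irreflexive kappa)
    (htree : (SimpleGraph.mk kappa ⟨fun _ _ h => hsym h⟩ ⟨hirr⟩).IsTree) :
    HasAFPP kappa :=
  htree.hasAFPP
end

section
/- Let (X,κ) be a digital image with the approximate fixed point property, and let n be a nonnegative integer. Then the digital image (X × [0,n]_ℤ, NP(κ,c₁)) has the approximate fixed point property, where [0,n]_ℤ = {0,1,…,n} ⊆ ℤ carries the c₁-adjacency (s ↔ t iff |s − t| = 1). -/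
/-- If `(X,κ)` has the AFPP then so does
`(X × [0,n]_ℤ, NP(κ,c₁))`. -/
theorem afpp_prod_interval {X : Type*} (kappa : X → X → Prop)
    (hirr : Irreflexive kappa) (hsym : Symmetric kappa)
    (hX : HasAFPP kappa) (n : ℕ) :
    HasAFPP (NP kappa
      (fun s t : Set.Icc (0 : ℤ) (n : ℤ) => |(s : ℤ) - (t : ℤ)| = 1)) := by
  classical
  intro f hf
  let el : ℕ → Set.Icc (0:ℤ) (n:ℤ) := fun k =>
    ⟨min (k:ℤ) (n:ℤ), ⟨le_min (Int.ofNat_nonneg k) (Int.ofNat_nonneg n), min_le_right _ _⟩⟩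
  have elcast : ∀ k : ℕ, k ≤ n → ((el k : ℤ)) = (k:ℤ) := by
    intro k hk
    exact min_eq_left (by exact_mod_cast hk)
  let F2 : X → ℕ → ℤ := fun x k => ((f (x, el k)).2 : ℤ)
  have hF2mem : ∀ x k, 0 ≤ F2 x k ∧ F2 x k ≤ (n:ℤ) := fun x k =>
    Set.mem_Icc.mp (f (x, el k)).2.2
  have key : ∀ (x x' : X) (s t : Set.Icc (0:ℤ) (n:ℤ)),
      (x = x' ∨ kappa x x') → ((s:ℤ) = (t:ℤ) ∨ |(s:ℤ) - (t:ℤ)| = 1) →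
      ((f (x, s)).1 = (f (x', t)).1 ∨ kappa (f (x, s)).1 (f (x', t)).1) ∧
        |((f (x, s)).2 : ℤ) - ((f (x', t)).2 : ℤ)| ≤ 1 := by
    intro x x' s t hx hst
    by_cases hpq : (x, s) = (x', t)
    · rw [hpq]
      exact ⟨Or.inl rfl, by simp⟩
    · have hnp : NP kappa (fun s t : Set.Icc (0:ℤ) (n:ℤ) => |(s:ℤ)-(t:ℤ)| = 1) (x,s) (x',t) := by
        refine ⟨hpq, ?_, ?_⟩
        · rcases hx with h | h
          · exact Or.inr h
          · exact Or.inl h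
        · rcases hst with h | h
          · exact Or.inr (Subtype.ext h)
          · exact Or.inl h
      rcases hf _ _ hnp with h | h
      · rw [h]; exact ⟨Or.inl rfl, by simp⟩
      · obtain ⟨-, h1, h2⟩ := h
        constructor
        · rcases h1 with h | h
          · exact Or.inr h
          · exact Or.inl h
        · rcases h2 with h | h
          · exact le_of_eq h
          · rw [h]; simp
  have hex : ∀ x, ∃ k, k ≤ n ∧ F2 x k ≤ (k:ℤ) + 1 := by
    intro x
    refine ⟨n, le_rfl, ?_⟩
    have := (hF2mem x n).2
    omega
  let m : X → ℕ := fun x => Nat.find (hex x)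
  have hm_le : ∀ x, m x ≤ n := fun x => (Nat.find_spec (hex x)).1
  have hm_ub : ∀ x, F2 x (m x) ≤ (m x : ℤ) + 1 := fun x => (Nat.find_spec (hex x)).2
  have hm_lb : ∀ x, (m x : ℤ) - 1 ≤ F2 x (m x) := by
    intro x
    rcases Nat.eq_zero_or_pos (m x) with h0 | hpos
    · have h1 := (hF2mem x (m x)).1
      omega
    · have hlt : m x - 1 < m x := by omega
      have hnot := Nat.find_min (hex x) hlt
      push_neg at hnot
      have h2 : ((m x - 1 : ℕ) : ℤ) + 1 < F2 x (m x - 1) := hnot (by have := hm_le x; omega)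
      have h3 : |F2 x (m x) - F2 x (m x - 1)| ≤ 1 := by
        refine (key x x (el (m x)) (el (m x - 1)) (Or.inl rfl) (Or.inr ?_)).2
        rw [elcast _ (hm_le x), elcast _ (by have := hm_le x; omega)]
        rw [abs_eq (by norm_num : (0:ℤ) ≤ 1)]
        omega
      have h4 := abs_le.mp h3
      omega
  have hlip : ∀ x x', kappa x x' → m x' ≤ m x + 1 := by
    intro x x' hk
    by_cases hn : m x + 1 ≤ n
    · apply Nat.find_min'
      refine ⟨hn, ?_⟩
      have h3 : |F2 x' (m x + 1) - F2 x (m x)| ≤ 1 := by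
        refine (key x' x (el (m x + 1)) (el (m x)) (Or.inr (hsym hk)) (Or.inr ?_)).2
        rw [elcast _ hn, elcast _ (hm_le x)]
        rw [abs_eq (by norm_num : (0:ℤ) ≤ 1)]
        omega
      have h4 := abs_le.mp h3
      have h5 := hm_ub x
      omega
    · have := hm_le x'
      omega
  have hg : DigContinuous kappa kappa (fun x => (f (x, el (m x))).1) := by
    intro x x' hk
    refine (key x x' (el (m x)) (el (m x')) (Or.inr hk) ?_).1
    rw [elcast _ (hm_le x), elcast _ (hm_le x')]
    have h1 := hlip x x' hk
    have h2 := hlip x' x (hsym hk)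
    rw [abs_eq (by norm_num : (0:ℤ) ≤ 1)]
    omega
  obtain ⟨x0, hx0⟩ := hX _ hg
  refine ⟨(x0, el (m x0)), ?_⟩
  by_cases heq : f (x0, el (m x0)) = (x0, el (m x0))
  · exact Or.inl heq
  · refine Or.inr ⟨heq, ?_, ?_⟩
    · rcases hx0 with h | h
      · exact Or.inr h
      · exact Or.inl h
    · have h1 : ((f (x0, el (m x0))).2 : ℤ) ≤ (m x0 : ℤ) + 1 := hm_ub x0
      have h2 : (m x0 : ℤ) - 1 ≤ ((f (x0, el (m x0))).2 : ℤ) := hm_lb x0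
      by_cases hz : ((f (x0, el (m x0))).2 : ℤ) = ((el (m x0)) : ℤ)
      · exact Or.inr (Subtype.ext hz)
      · left
        show |((f (x0, el (m x0))).2 : ℤ) - ((el (m x0)) : ℤ)| = 1
        rw [elcast _ (hm_le x0)]
        rw [elcast _ (hm_le x0)] at hz
        rw [abs_eq (by norm_num : (0:ℤ) ≤ 1)]
        omega
end

section
/- Let (X,κ) be a digital image with the approximate fixed point property, and let n, v be positive integers. Let Y = [0,n]_ℤ^v ⊆ ℤ^v with the c_v-adjacency. Then (X × Y, NP(κ,c_v)) has the approximate fixed point property. -/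
/-! ### Auxiliary definitions -/

/-- The digital interval `[0,n]` as a subtype of `ℤ`. -/
abbrev IccT (n : ℕ) := {a : ℤ // a ∈ Set.Icc (0 : ℤ) (n : ℤ)}

/-- Adjacency on the digital interval. -/
def nearAdj {n : ℕ} (a b : IccT n) : Prop := a ≠ b ∧ |a.1 - b.1| ≤ 1

/-- The digital cube `[0,n]^k`. -/
abbrev CubeT (n k : ℕ) := {y : Fin k → ℤ // ∀ i, y i ∈ Set.Icc (0 : ℤ) (n : ℤ)}

/-- The `ℓ∞` adjacency on the cube (which coincides with `c_k`). -/
def linf {n k : ℕ} (y y' : CubeT n k) : Prop := y ≠ y' ∧ ∀ i, |y.1 i - y'.1 i| ≤ 1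

lemma linf_symm {n k : ℕ} : Symmetric (linf (n := n) (k := k)) := by
  rintro y y' ⟨h1, h2⟩
  exact ⟨h1.symm, fun i => by rw [abs_sub_comm]; exact h2 i⟩

lemma NP_irrefl {X Y : Type*} (kappa : X → X → Prop) (lam : Y → Y → Prop) :
    Irreflexive (NP kappa lam) := fun p h => h.1 rfl

lemma NP_symm {X Y : Type*} {kappa : X → X → Prop} {lam : Y → Y → Prop}
    (hk : Symmetric kappa) (hl : Symmetric lam) : Symmetric (NP kappa lam) := by
  rintro p q ⟨h1, h2, h3⟩
  refine ⟨h1.symm, ?_, ?_⟩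
  · rcases h2 with h | h
    · exact Or.inl (hk h)
    · exact Or.inr h.symm
  · rcases h3 with h | h
    · exact Or.inl (hl h)
    · exact Or.inr h.symm

/-- Transport of the AFPP along a bijection matching the adjacencies. -/
lemma afpp_of_equiv {A B : Type*} (e : A ≃ B) {alpha : A → A → Prop}
    {beta : B → B → Prop} (h : ∀ a a', alpha a a' ↔ beta (e a) (e a'))
    (hB : HasAFPP beta) : HasAFPP alpha := by
  intro f hf
  have hcont : DigContinuous beta beta (fun b => e (f (e.symm b))) := by
    intro b b' hbb
    rcases hf (e.symm b) (e.symm b') ((h _ _).mpr (by simpa using hbb)) with h1 | h1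
    · left; simp only [h1]
    · right; exact (h _ _).mp h1
  obtain ⟨b, hb⟩ := hB _ hcont
  refine ⟨e.symm b, ?_⟩
  rcases hb with hb | hb
  · left
    have := congrArg e.symm hb
    simpa using this
  · right
    rw [h]
    simpa using hb

/-- Consequences of continuity for a self-map of `Z × [0,n]`. -/
lemma cont_step {Z : Type*} {zeta : Z → Z → Prop} {n : ℕ}
    {f : Z × IccT n → Z × IccT n}
    (hf : DigContinuous (NP zeta nearAdj) (NP zeta nearAdj) f) {p q : Z × IccT n}
    (h : NP zeta nearAdj p q) :
    (zeta (f p).1 (f q).1 ∨ (f p).1 = (f q).1) ∧ |(f p).2.1 - (f q).2.1| ≤ 1 := by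
  rcases hf p q h with h1 | h1
  · rw [h1]; exact ⟨Or.inr rfl, by simp⟩
  · refine ⟨h1.2.1, ?_⟩
    rcases h1.2.2 with h2 | h2
    · exact h2.2
    · rw [h2]; simp

/-- **One–dimensional step.** If `Z` has the AFPP, so does `Z × [0,n]`. -/
lemma lemA {Z : Type*} (zeta : Z → Z → Prop) (hirr : Irreflexive zeta)
    (hsym : Symmetric zeta) (hZ : HasAFPP zeta) (n : ℕ) :
    HasAFPP (NP zeta (nearAdj (n := n))) := by
  classical
  intro f hf
  -- the clamped inclusion of `ℕ` into `[0,n]`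
  set iota : ℕ → IccT n := fun k =>
    ⟨min (k : ℤ) n, ⟨le_min (by positivity) (by positivity), min_le_right _ _⟩⟩ with hiota
  have hival : ∀ k : ℕ, (iota k).1 = min (k : ℤ) n := fun k => rfl
  have hex : ∀ z : Z, ∃ k : ℕ, (f (z, iota k)).2.1 ≤ (iota k).1 := by
    intro z
    refine ⟨n, ?_⟩
    have := (f (z, iota n)).2.2.2
    simpa [hival] using this
  set s : Z → ℕ := fun z => Nat.find (hex z) with hs
  have hsn : ∀ z, s z ≤ n := by
    intro z
    refine Nat.find_le ?_
    have := (f (z, iota n)).2.2.2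
    simpa [hival] using this
  have hsval : ∀ z, (iota (s z)).1 = (s z : ℤ) := by
    intro z
    rw [hival]
    exact min_eq_left (by exact_mod_cast hsn z)
  -- Fact 1: `f` approximately fixes the second coordinate at `(z, iota (s z))`
  have fact1 : ∀ z, (s z : ℤ) - 1 ≤ (f (z, iota (s z))).2.1 ∧
      (f (z, iota (s z))).2.1 ≤ (s z : ℤ) := by
    intro z
    have hspec : (f (z, iota (s z))).2.1 ≤ (s z : ℤ) := by
      have := Nat.find_spec (hex z)
      rwa [hsval z] at this
    refine ⟨?_, hspec⟩
    rcases Nat.eq_zero_or_pos (s z) with h0 | hpos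
    · rw [h0]
      have h00 := (f (z, iota 0)).2.2.1
      push_cast
      linarith
    · obtain ⟨m, hm⟩ : ∃ m, s z = m + 1 := ⟨s z - 1, by omega⟩
      have hmn : (m : ℤ) < n := by
        have := hsn z; omega
      have hivm : (iota m).1 = (m : ℤ) := min_eq_left (by omega)
      have hmlt : m < Nat.find (hex z) := by
        have hx : Nat.find (hex z) = m + 1 := hm
        omega
      have hmin : ¬ ((f (z, iota m)).2.1 ≤ (iota m).1) :=
        Nat.find_min (hex z) hmlt
      rw [hivm] at hmin
      push_neg at hmin
      have hadj : NP zeta (nearAdj (n := n)) (z, iota m) (z, iota (s z)) := by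
        have hne : (iota m).1 ≠ (iota (s z)).1 := by
          rw [hivm, hsval z]; omega
        refine ⟨?_, Or.inr rfl, Or.inl ⟨fun h => hne (congrArg Subtype.val h), ?_⟩⟩
        · intro h
          exact hne (congrArg Subtype.val (congrArg Prod.snd h))
        · rw [hivm, hsval z, hm]
          push_cast
          rw [show (m : ℤ) - (m + 1) = -1 by ring]
          simp
      have := (cont_step hf hadj).2
      have habs := abs_le.mp this
      omega
  -- Fact 2: `s` is a 1-Lipschitz selection
  have fact2 : ∀ z z', zeta z z' → s z' ≤ s z + 1 := by
    intro z z' hzz'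
    have hzne : z ≠ z' := fun h => hirr z' (h ▸ hzz')
    refine Nat.find_le ?_
    rcases eq_or_lt_of_le (hsn z) with heq | hlt
    · -- s z = n : then iota (s z + 1) has value n and f₂ ≤ n always
      have : (iota (s z + 1)).1 = (n : ℤ) := by
        rw [hival]; push_cast; omega
      rw [this]
      exact (f (z', iota (s z + 1))).2.2.2
    · have hiv1 : (iota (s z + 1)).1 = ((s z : ℤ) + 1) := by
        rw [hival]; push_cast; omega
      have hadj : NP zeta (nearAdj (n := n)) (z, iota (s z)) (z', iota (s z + 1)) := by
        refine ⟨?_, Or.inl hzz', Or.inl ⟨?_, ?_⟩⟩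
        · intro h
          exact hzne (congrArg Prod.fst h)
        · intro h
          have := congrArg Subtype.val h
          rw [hsval z, hiv1] at this
          omega
        · rw [hsval z, hiv1]
          rw [show (s z : ℤ) - ((s z : ℤ) + 1) = -1 by ring]
          simp
      have h1 := (cont_step hf hadj).2
      have h2 := (fact1 z).2
      have := abs_le.mp h1
      rw [hiv1]
      omega
  have fact2' : ∀ z z', zeta z z' → |(s z : ℤ) - (s z' : ℤ)| ≤ 1 := by
    intro z z' hzz'
    have h1 := fact2 z z' hzz'
    have h2 := fact2 z' z (hsym hzz')
    rw [abs_le]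
    omega
  -- the induced self-map of `Z`
  set h : Z → Z := fun z => (f (z, iota (s z))).1 with hh
  have hcont : DigContinuous zeta zeta h := by
    intro z z' hzz'
    have hzne : z ≠ z' := fun heq => hirr z' (heq ▸ hzz')
    have hadj : NP zeta (nearAdj (n := n)) (z, iota (s z)) (z', iota (s z')) := by
      refine ⟨fun heq => hzne (congrArg Prod.fst heq), Or.inl hzz', ?_⟩
      by_cases hss : iota (s z) = iota (s z')
      · exact Or.inr hss
      · refine Or.inl ⟨hss, ?_⟩
        rw [hsval z, hsval z']
        exact fact2' z z' hzz'
    rcases (cont_step hf hadj).1 with h1 | h1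
    · exact Or.inr h1
    · exact Or.inl h1
  obtain ⟨z0, hz0⟩ := hZ h hcont
  refine ⟨(z0, iota (s z0)), ?_⟩
  by_cases hfp : f (z0, iota (s z0)) = (z0, iota (s z0))
  · exact Or.inl hfp
  · refine Or.inr ⟨hfp, ?_, ?_⟩
    · rcases hz0 with h1 | h1
      · exact Or.inr h1
      · exact Or.inl h1
    · by_cases h2 : (f (z0, iota (s z0))).2 = iota (s z0)
      · exact Or.inr h2
      · refine Or.inl ⟨h2, ?_⟩
        rw [hsval z0]
        have := fact1 z0
        rw [abs_le]
        constructor <;> linarith [this.1, this.2]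

/-- Splitting off the last coordinate of a cube. -/
def cubeEquiv (n k : ℕ) : CubeT n (k + 1) ≃ CubeT n k × IccT n where
  toFun y := (⟨Fin.init y.1, fun i => y.2 i.castSucc⟩, ⟨y.1 (Fin.last k), y.2 _⟩)
  invFun p := ⟨Fin.snoc p.1.1 p.2.1, fun i => by
    refine Fin.lastCases ?_ ?_ i
    · simpa using p.2.2
    · intro j; simpa using p.1.2 j⟩
  left_inv y := Subtype.ext (Fin.snoc_init_self y.1)
  right_inv p := by
    refine Prod.ext (Subtype.ext ?_) (Subtype.ext ?_) <;> simp

/-- Splitting off the last coordinate of `Z × [0,n]^{k+1}`. -/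
def prodCubeEquiv (Z : Type*) (n k : ℕ) :
    Z × CubeT n (k + 1) ≃ (Z × CubeT n k) × IccT n where
  toFun p := ((p.1, (cubeEquiv n k p.2).1), (cubeEquiv n k p.2).2)
  invFun q := (q.1.1, (cubeEquiv n k).symm (q.1.2, q.2))
  left_inv p := by simp
  right_inv q := by simp

lemma forall_last_split {k : ℕ} (P : Fin (k + 1) → Prop) :
    (∀ i, P i) ↔ (∀ j : Fin k, P j.castSucc) ∧ P (Fin.last k) := by
  constructor
  · intro h
    exact ⟨fun j => h _, h _⟩
  · rintro ⟨h1, h2⟩ i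
    refine Fin.lastCases h2 h1 i

/-- The key adjacency correspondence for the splitting. -/
lemma adjacency_correspondence {Z : Type*} (zeta : Z → Z → Prop) (n k : ℕ)
    (p q : Z × CubeT n (k + 1)) :
    NP zeta (linf (n := n) (k := k + 1)) p q ↔
      NP (NP zeta (linf (n := n) (k := k))) (nearAdj (n := n))
        (prodCubeEquiv Z n k p) (prodCubeEquiv Z n k q) := by
  obtain ⟨x, y⟩ := p
  obtain ⟨x', y'⟩ := q
  have hne : ((x, y) ≠ (x', y')) ↔
      (prodCubeEquiv Z n k (x, y) ≠ prodCubeEquiv Z n k (x', y')) :=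
    (Equiv.apply_eq_iff_eq (prodCubeEquiv Z n k)).symm.not
  have hall : (linf y y' ∨ y = y') ↔ ∀ i, |y.1 i - y'.1 i| ≤ 1 := by
    constructor
    · rintro (⟨_, h⟩ | rfl)
      · exact h
      · intro i; simp
    · intro h
      by_cases hyy : y = y'
      · exact Or.inr hyy
      · exact Or.inl ⟨hyy, h⟩
  -- components of the images under the equivalence
  set a : CubeT n k := ⟨Fin.init y.1, fun i => y.2 i.castSucc⟩ with ha
  set a' : CubeT n k := ⟨Fin.init y'.1, fun i => y'.2 i.castSucc⟩ with ha'
  set b : IccT n := ⟨y.1 (Fin.last k), y.2 _⟩ with hb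
  set b' : IccT n := ⟨y'.1 (Fin.last k), y'.2 _⟩ with hb'
  have halla : (linf a a' ∨ a = a') ↔ ∀ j : Fin k, |y.1 j.castSucc - y'.1 j.castSucc| ≤ 1 := by
    constructor
    · rintro (⟨_, h⟩ | h)
      · exact h
      · have := congrArg Subtype.val h
        intro j
        rw [show y.1 j.castSucc = a.1 j from rfl, show y'.1 j.castSucc = a'.1 j from rfl, this]
        simp
    · intro h
      by_cases hyy : a = a'
      · exact Or.inr hyy
      · exact Or.inl ⟨hyy, h⟩
  have hallb : (nearAdj b b' ∨ b = b') ↔ |y.1 (Fin.last k) - y'.1 (Fin.last k)| ≤ 1 := by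
    constructor
    · rintro (⟨_, h⟩ | h)
      · exact h
      · have := congrArg Subtype.val h
        rw [show y.1 (Fin.last k) = b.1 from rfl, show y'.1 (Fin.last k) = b'.1 from rfl, this]
        simp
    · intro h
      by_cases hbb : b = b'
      · exact Or.inr hbb
      · exact Or.inl ⟨hbb, h⟩
  have hfirst : (NP zeta (linf (n := n) (k := k)) (x, a) (x', a') ∨ (x, a) = (x', a')) ↔
      ((zeta x x' ∨ x = x') ∧ (∀ j : Fin k, |y.1 j.castSucc - y'.1 j.castSucc| ≤ 1)) := by
    constructor
    · rintro (⟨_, h2, h3⟩ | h)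
      · exact ⟨h2, halla.mp h3⟩
      · obtain ⟨hx, hay⟩ : x = x' ∧ a = a' := Prod.mk.injEq .. ▸ h
        exact ⟨Or.inr hx, halla.mp (Or.inr hay)⟩
    · rintro ⟨h1, h2⟩
      by_cases hpq : (x, a) = (x', a')
      · exact Or.inr hpq
      · exact Or.inl ⟨hpq, h1, halla.mpr h2⟩
  rw [show prodCubeEquiv Z n k (x, y) = ((x, a), b) from rfl,
      show prodCubeEquiv Z n k (x', y') = ((x', a'), b') from rfl]
  constructor
  · rintro ⟨h1, h2, h3⟩
    refine ⟨hne.mp h1, ?_, ?_⟩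
    · exact hfirst.mpr ⟨h2, fun j => (hall.mp h3) j.castSucc⟩
    · exact hallb.mpr ((hall.mp h3) (Fin.last k))
  · rintro ⟨h1, h2, h3⟩
    refine ⟨hne.mpr h1, (hfirst.mp h2).1, ?_⟩
    refine hall.mpr ?_
    rw [forall_last_split]
    exact ⟨(hfirst.mp h2).2, hallb.mp h3⟩

/-- AFPP for `Z × [0,n]^k`, by induction on `k`. -/
lemma cube_afpp {Z : Type*} (zeta : Z → Z → Prop) (hirr : Irreflexive zeta)
    (hsym : Symmetric zeta) (hZ : HasAFPP zeta) (n : ℕ) (k : ℕ) :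
    HasAFPP (NP zeta (linf (n := n) (k := k))) := by
  induction k with
  | zero =>
    intro f hf
    have hsub : ∀ y y' : CubeT n 0, y = y' := by
      intro y y'
      exact Subtype.ext (funext fun i => i.elim0)
    set y0 : CubeT n 0 := ⟨fun i => i.elim0, fun i => i.elim0⟩ with hy0
    set g : Z → Z := fun z => (f (z, y0)).1 with hg
    have hcont : DigContinuous zeta zeta g := by
      intro z z' hzz'
      have hzne : z ≠ z' := fun heq => hirr z' (heq ▸ hzz')
      have hadj : NP zeta (linf (n := n) (k := 0)) (z, y0) (z', y0) :=
        ⟨fun heq => hzne (congrArg Prod.fst heq), Or.inl hzz', Or.inr rfl⟩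
      rcases hf _ _ hadj with h1 | h1
      · exact Or.inl (congrArg Prod.fst h1)
      · rcases h1.2.1 with h2 | h2
        · exact Or.inr h2
        · exact Or.inl h2
    obtain ⟨z0, hz0⟩ := hZ g hcont
    refine ⟨(z0, y0), ?_⟩
    by_cases hfp : f (z0, y0) = (z0, y0)
    · exact Or.inl hfp
    · refine Or.inr ⟨hfp, ?_, Or.inr (hsub _ _)⟩
      rcases hz0 with h1 | h1
      · exact Or.inr h1
      · exact Or.inl h1
  | succ k ih =>
    have hirr' : Irreflexive (NP zeta (linf (n := n) (k := k))) := NP_irrefl _ _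
    have hsym' : Symmetric (NP zeta (linf (n := n) (k := k))) := NP_symm hsym linf_symm
    have key := lemA (NP zeta (linf (n := n) (k := k))) hirr' hsym' ih n
    exact afpp_of_equiv (prodCubeEquiv Z n k) (adjacency_correspondence zeta n k) key

/-- If `(X,κ)` has the AFPP then so does
`(X × [0,n]_ℤ^v, NP(κ,c_v))`. -/
theorem afpp_prod_cube {X : Type*} (kappa : X → X → Prop)
    (hirr : Irreflexive kappa) (hsym : Symmetric kappa)
    (hX : HasAFPP kappa) (n v : ℕ) (hn : 0 < n) (hv : 0 < v) :
    HasAFPP (NP kappa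
      (fun p q : {y : Fin v → ℤ // ∀ i, y i ∈ Set.Icc (0 : ℤ) (n : ℤ)} =>
        cAdj v p.val q.val)) := by
  have key := cube_afpp kappa hirr hsym hX n v
  refine afpp_of_equiv (Equiv.refl _) ?_ key
  rintro ⟨x, y⟩ ⟨x', y'⟩
  simp only [Equiv.refl_apply]
  unfold NP cAdj linf
  constructor
  · rintro ⟨h1, h2, h3⟩
    refine ⟨h1, h2, ?_⟩
    rcases h3 with ⟨ha, hb, _⟩ | ha
    · exact Or.inl ⟨fun h => ha (congrArg Subtype.val h), hb⟩
    · exact Or.inr (by simpa [Subtype.ext_iff] using ha)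
  · rintro ⟨h1, h2, h3⟩
    refine ⟨h1, h2, ?_⟩
    rcases h3 with ⟨ha, hb⟩ | ha
    · refine Or.inl ⟨fun h => ha (Subtype.ext h), hb, ?_⟩
      calc (Finset.univ.filter (fun i => y.1 i ≠ y'.1 i)).card
          ≤ Finset.univ.card := Finset.card_filter_le _ _
        _ = v := by simp
    · exact Or.inr (by simpa [Subtype.ext_iff] using ha)
end

section
/- Let (X,κ) be a finite digital image with the approximate fixed point property, let v be a positive integer, and let a_i ≤ b_i be integers for i = 1,…,v. Then (X × ∏_{i=1}^v [a_i,b_i]_ℤ, NP(κ,c_v)) has the approximate fixed point property, where ∏_{i=1}^v [a_i,b_i]_ℤ ⊆ ℤ^v carries the c_v-adjacency. -/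
/-! ### Auxiliary machinery: a one-step "move toward target" flow on a box. -/

/-- Move `t` one step toward `s`. -/
def istep (t s : ℤ) : ℤ := if t < s then t + 1 else if s < t then t - 1 else t

lemma istep_lip {t t' s s' : ℤ} (h1 : |t - t'| ≤ 1) (h2 : |s - s'| ≤ 1) :
    |istep t s - istep t' s'| ≤ 1 := by
  rw [abs_le] at h1 h2 ⊢
  unfold istep
  split_ifs <;> omega

lemma istep_close (t s : ℤ) : |t - istep t s| ≤ 1 := by
  rw [abs_le]; unfold istep; split_ifs <;> omega

lemma istep_cases (t s : ℤ) :
    (t < s ∧ istep t s = t + 1) ∨ (s < t ∧ istep t s = t - 1) ∨ (s = t ∧ istep t s = t) := by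
  unfold istep; split_ifs <;> omega

lemma istep_mem {lo hi t s : ℤ} (h1 : lo ≤ t) (h2 : t ≤ hi) (h3 : lo ≤ s) (h4 : s ≤ hi) :
    lo ≤ istep t s ∧ istep t s ≤ hi := by
  unfold istep; split_ifs <;> omega

/-- The box `∏ [a i, b i]` as a subtype. -/
abbrev BoxT (v : ℕ) (a b : Fin v → ℤ) := {y : Fin v → ℤ // ∀ i, y i ∈ Set.Icc (a i) (b i)}

/-- Given a self-map `g` of the box, move every coordinate one step toward its `g`-image. -/
def flowStep {v : ℕ} {a b : Fin v → ℤ} (g : BoxT v a b → BoxT v a b) (y : BoxT v a b) :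
    BoxT v a b :=
  ⟨fun i => istep (y.1 i) ((g y).1 i), fun i =>
    ⟨(istep_mem (y.2 i).1 (y.2 i).2 ((g y).2 i).1 ((g y).2 i).2).1,
     (istep_mem (y.2 i).1 (y.2 i).2 ((g y).2 i).1 ((g y).2 i).2).2⟩⟩

lemma flow_iter_lip {v : ℕ} {a b : Fin v → ℤ} (g g' : BoxT v a b → BoxT v a b)
    (H : ∀ (y y' : BoxT v a b), (∀ i, |y.1 i - y'.1 i| ≤ 1) →
      ∀ i, |(g y).1 i - (g' y').1 i| ≤ 1)
    (y0 : BoxT v a b) (m : ℕ) :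
    ∀ i, |((flowStep g)^[m] y0).1 i - ((flowStep g')^[m] y0).1 i| ≤ 1 := by
  induction m with
  | zero => simp
  | succ k ih =>
      rw [Function.iterate_succ_apply', Function.iterate_succ_apply']
      exact fun i => istep_lip (ih i) (H _ _ ih i)

lemma flow_conv {v : ℕ} {a b : Fin v → ℤ} (g : BoxT v a b → BoxT v a b)
    (Hg : ∀ (y : BoxT v a b) (i : Fin v), |(g y).1 i - (g (flowStep g y)).1 i| ≤ 1)
    (y0 : BoxT v a b) (hy0 : ∀ i, y0.1 i = a i) :
    ∀ (k : ℕ) (i : Fin v),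
      -1 ≤ (g ((flowStep g)^[k] y0)).1 i - ((flowStep g)^[k] y0).1 i ∧
        ((g ((flowStep g)^[k] y0)).1 i ≤ ((flowStep g)^[k] y0).1 i + 1 ∨
          a i + (k : ℤ) ≤ ((flowStep g)^[k] y0).1 i) := by
  intro k
  induction k with
  | zero =>
      intro i
      rw [Function.iterate_zero_apply]
      have h1 := ((g y0).2 i).1
      have h2 := hy0 i
      constructor
      · omega
      · right; omega
  | succ k ih =>
      intro i
      have ih' := ih i
      have hs' := Hg ((flowStep g)^[k] y0) i
      rw [abs_le] at hs'
      have hC := istep_cases (((flowStep g)^[k] y0).1 i) ((g ((flowStep g)^[k] y0)).1 i)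
      have ht' : (flowStep g ((flowStep g)^[k] y0)).1 i
          = istep (((flowStep g)^[k] y0).1 i) ((g ((flowStep g)^[k] y0)).1 i) := rfl
      rw [← ht'] at hC
      rw [Function.iterate_succ_apply']
      push_cast
      omega

lemma flow_conv_final {v : ℕ} {a b : Fin v → ℤ} (hab : ∀ i, a i ≤ b i)
    (g : BoxT v a b → BoxT v a b)
    (Hg : ∀ (y : BoxT v a b) (i : Fin v), |(g y).1 i - (g (flowStep g y)).1 i| ≤ 1)
    (m : ℕ) (hm : ∀ i, b i - a i ≤ (m : ℤ)) :
    ∀ i, |(g ((flowStep g)^[m] ⟨a, fun i => ⟨le_refl _, hab i⟩⟩)).1 i -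
      ((flowStep g)^[m] ⟨a, fun i => ⟨le_refl _, hab i⟩⟩).1 i| ≤ 1 := by
  intro i
  have hc := flow_conv g Hg ⟨a, fun i => ⟨le_refl _, hab i⟩⟩ (fun _ => rfl) m i
  have h1 := (((flowStep g)^[m] (⟨a, fun i => ⟨le_refl _, hab i⟩⟩ : BoxT v a b)).2 i).2
  have h2 := ((g ((flowStep g)^[m] (⟨a, fun i => ⟨le_refl _, hab i⟩⟩ : BoxT v a b))).2 i).1
  have h3 := ((g ((flowStep g)^[m] (⟨a, fun i => ⟨le_refl _, hab i⟩⟩ : BoxT v a b))).2 i).2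
  have hmi := hm i
  rw [abs_le]
  omega

/-- If a finite digital image `(X,κ)` has the AFPP then so does
`(X × ∏_{i=1}^v [a_i,b_i]_ℤ, NP(κ,c_v))`. -/
theorem afpp_prod_box {X : Type*} [Fintype X] (kappa : X → X → Prop)
    (hirr : Irreflexive kappa) (hsym : Symmetric kappa)
    (hX : HasAFPP kappa) (v : ℕ) (hv : 0 < v)
    (a b : Fin v → ℤ) (hab : ∀ i, a i ≤ b i) :
    HasAFPP (NP kappa
      (fun p q : {y : Fin v → ℤ // ∀ i, y i ∈ Set.Icc (a i) (b i)} =>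
        cAdj v p.val q.val)) := by
  classical
  intro f hf
  -- any two subtype points whose coordinates are within 1 are `cAdj` (or equal)
  have hcadj : ∀ y y' : BoxT v a b, y ≠ y' → (∀ i, |y.1 i - y'.1 i| ≤ 1) →
      cAdj v y.val y'.val := by
    intro y y' hne hb
    refine ⟨fun h => hne (Subtype.ext h), hb, ?_⟩
    exact le_trans (Finset.card_filter_le _ _) (by simp)
  -- continuity in the box coordinates
  have hf2 : ∀ p q : X × BoxT v a b,
      NP kappa (fun p q : BoxT v a b => cAdj v p.val q.val) p q →
      ∀ i, |(f p).2.1 i - (f q).2.1 i| ≤ 1 := by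
    intro p q hpq i
    rcases hf p q hpq with h | h
    · rw [h]; simp
    · rcases h.2.2 with h2 | h2
      · exact h2.2.1 i
      · rw [h2]; simp
  obtain ⟨m, hm⟩ : ∃ m : ℕ, ∀ i, b i - a i ≤ (m : ℤ) := by
    refine ⟨Finset.univ.sup (fun i : Fin v => (b i - a i).toNat), fun i => ?_⟩
    have h : (b i - a i).toNat ≤ Finset.univ.sup (fun i : Fin v => (b i - a i).toNat) :=
      Finset.le_sup (f := fun i : Fin v => (b i - a i).toNat) (Finset.mem_univ i)
    omega
  -- the stabilizing selection T
  obtain ⟨T, hTlip, hconv⟩ :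
      ∃ T : X → BoxT v a b,
        (∀ x x', kappa x x' → ∀ i, |(T x).1 i - (T x').1 i| ≤ 1) ∧
        (∀ x i, |(f (x, T x)).2.1 i - (T x).1 i| ≤ 1) := by
    refine ⟨fun x => (flowStep (fun y => (f (x, y)).2))^[m] ⟨a, fun i => ⟨le_refl _, hab i⟩⟩,
      ?_, ?_⟩
    · intro x x' hk
      have hxne : x ≠ x' := by rintro rfl; exact hirr x hk
      refine flow_iter_lip _ _ ?_ _ m
      intro y y' hyy i
      refine hf2 (x, y) (x', y') ⟨fun h => hxne (congrArg Prod.fst h), Or.inl hk, ?_⟩ i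
      by_cases hy : y = y'
      · exact Or.inr hy
      · exact Or.inl (hcadj _ _ hy hyy)
    · intro x
      refine flow_conv_final hab (fun y => (f (x, y)).2) ?_ m hm
      intro y j
      by_cases hyy : flowStep (fun y => (f (x, y)).2) y = y
      · rw [hyy]; simp
      · refine hf2 (x, y) (x, flowStep (fun y => (f (x, y)).2) y)
          ⟨fun h => hyy (congrArg Prod.snd h).symm, Or.inr rfl,
            Or.inl (hcadj _ _ (fun h => hyy h.symm) ?_)⟩ j
        intro i2
        exact istep_close (y.1 i2) ((f (x, y)).2.1 i2)
  -- the induced continuous self-map of X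
  have hPsi : DigContinuous kappa kappa (fun x => (f (x, T x)).1) := by
    intro x x' hk
    have hxne : x ≠ x' := by rintro rfl; exact hirr x hk
    have hnp : NP kappa (fun p q : BoxT v a b => cAdj v p.val q.val) (x, T x) (x', T x') := by
      refine ⟨fun h => hxne (congrArg Prod.fst h), Or.inl hk, ?_⟩
      by_cases hT : T x = T x'
      · exact Or.inr hT
      · exact Or.inl (hcadj _ _ hT (hTlip x x' hk))
    rcases hf _ _ hnp with h | h
    · exact Or.inl (congrArg Prod.fst h)
    · rcases h.2.1 with h1 | h1
      · exact Or.inr h1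
      · exact Or.inl h1
  obtain ⟨x0, hx0⟩ := hX (fun x => (f (x, T x)).1) hPsi
  refine ⟨(x0, T x0), ?_⟩
  by_cases hfix : f (x0, T x0) = (x0, T x0)
  · exact Or.inl hfix
  · right
    refine ⟨hfix, ?_, ?_⟩
    · rcases hx0 with h | h
      · exact Or.inr h
      · exact Or.inl h
    · by_cases h2 : (f (x0, T x0)).2 = T x0
      · exact Or.inr h2
      · exact Or.inl (hcadj _ _ h2 (fun i => hconv x0 i))
end

section
/- Let v be a positive integer, and let a_i ≤ b_i be integers for i = 1,…,v. Then the digital image (∏_{i=1}^v [a_i,b_i]_ℤ, c_v) has the approximate fixed point property. -/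
/-- Step-nonexpansiveness propagates to nonexpansiveness at any scale `k`. -/
private lemma nonexp (v : ℕ) (a b : Fin v → ℤ) (F : (Fin v → ℤ) → (Fin v → ℤ))
    (hstep : ∀ x y : Fin v → ℤ, (∀ i, a i ≤ x i ∧ x i ≤ b i) → (∀ i, a i ≤ y i ∧ y i ≤ b i) →
      (∀ i, |x i - y i| ≤ 1) → ∀ i, |F x i - F y i| ≤ 1) :
    ∀ (k : ℕ) (x y : Fin v → ℤ), (∀ i, a i ≤ x i ∧ x i ≤ b i) → (∀ i, a i ≤ y i ∧ y i ≤ b i) →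
      (∀ i, |x i - y i| ≤ (k : ℤ)) → ∀ i, |F x i - F y i| ≤ (k : ℤ) := by
  intro k
  induction k with
  | zero =>
    intro x y hx hy hd i
    have hxy : x = y := funext fun j => by
      have h1 := hd j; have h2 := abs_nonneg (x j - y j)
      have h3 : |x j - y j| = 0 := le_antisymm (by exact_mod_cast h1) h2
      have := abs_eq_zero.mp h3; omega
    subst hxy; simp
  | succ n ih =>
    intro x y hx hy hd i
    set z : Fin v → ℤ := fun j => if y j < x j then y j + 1 else if x j < y j then y j - 1 else y j
      with hz
    have hzB : ∀ j, a j ≤ z j ∧ z j ≤ b j := by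
      intro j; have h1 := hx j; have h2 := hy j
      simp only [hz]; split_ifs <;> omega
    have hxz : ∀ j, |x j - z j| ≤ (n : ℤ) := by
      intro j
      have h1 := hd j
      rw [abs_le] at h1
      push_cast at h1
      rw [abs_le]
      simp only [hz]; split_ifs <;> omega
    have hzy : ∀ j, |z j - y j| ≤ 1 := by
      intro j; rw [abs_le]; simp only [hz]; split_ifs <;> omega
    have h5 := ih x z hx hzB hxz i
    have h6 := hstep z y hzB hy hzy i
    have h4 := abs_sub_le (F x i) (F z i) (F y i)
    have h7 : |F x i - F y i| ≤ (n : ℤ) + 1 := le_trans h4 (add_le_add h5 h6)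
    push_cast
    linarith

/-- Discrete Sine–Soardi descent: an invariant box of total width `≤ m` contains an
approximate fixed point. -/
private lemma descent (v : ℕ) (a b : Fin v → ℤ) (F : (Fin v → ℤ) → (Fin v → ℤ))
    (hne : ∀ (k : ℕ) (x y : Fin v → ℤ), (∀ i, a i ≤ x i ∧ x i ≤ b i) →
      (∀ i, a i ≤ y i ∧ y i ≤ b i) →
      (∀ i, |x i - y i| ≤ (k : ℤ)) → ∀ i, |F x i - F y i| ≤ (k : ℤ)) :
    ∀ (m : ℕ) (p q : Fin v → ℤ), (∀ i, a i ≤ p i) → (∀ i, p i ≤ q i) → (∀ i, q i ≤ b i) →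
      (∑ i, (q i - p i).toNat ≤ m) →
      (∀ x : Fin v → ℤ, (∀ i, p i ≤ x i ∧ x i ≤ q i) → ∀ i, p i ≤ F x i ∧ F x i ≤ q i) →
      ∃ x : Fin v → ℤ, (∀ i, p i ≤ x i ∧ x i ≤ q i) ∧ ∀ i, |F x i - x i| ≤ 1 := by
  intro m
  induction m with
  | zero =>
    intro p q hap hpq hqb hsum hinv
    refine ⟨p, fun i => ⟨le_rfl, hpq i⟩, ?_⟩
    intro i
    have h1 := hinv p (fun i => ⟨le_rfl, hpq i⟩) i
    have h2 : (q i - p i).toNat = 0 :=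
      Finset.sum_eq_zero_iff.mp (Nat.le_zero.mp hsum) i (Finset.mem_univ i)
    rw [abs_le]; omega
  | succ n ih =>
    intro p q hap hpq hqb hsum hinv
    by_cases hA : ∀ i, q i - p i ≤ 1
    · refine ⟨p, fun i => ⟨le_rfl, hpq i⟩, ?_⟩
      intro i
      have h1 := hinv p (fun i => ⟨le_rfl, hpq i⟩) i
      have h2 := hA i
      rw [abs_le]; omega
    push_neg at hA
    obtain ⟨i₀, hi₀⟩ := hA
    have hpS : p ∈ Finset.Icc p q := by
      rw [Finset.mem_Icc]; exact ⟨le_rfl, fun i => hpq i⟩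
    have hSne : (Finset.Icc p q).Nonempty := ⟨p, hpS⟩
    have hmemS : ∀ x : Fin v → ℤ, x ∈ Finset.Icc p q ↔ ∀ i, p i ≤ x i ∧ x i ≤ q i := by
      intro x; rw [Finset.mem_Icc]
      constructor
      · rintro ⟨h1, h2⟩ i; exact ⟨h1 i, h2 i⟩
      · intro h; exact ⟨fun i => (h i).1, fun i => (h i).2⟩
    set p' : Fin v → ℤ := fun i => (Finset.Icc p q).inf' hSne (fun x => F x i) with hp'
    set q' : Fin v → ℤ := fun i => (Finset.Icc p q).sup' hSne (fun x => F x i) with hq'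
    have hpL : ∀ i, p i ≤ p' i := fun i =>
      Finset.le_inf' hSne _ (fun y hy => (hinv y ((hmemS y).mp hy) i).1)
    have hqU : ∀ i, q' i ≤ q i := fun i =>
      Finset.sup'_le hSne _ (fun y hy => (hinv y ((hmemS y).mp hy) i).2)
    have hpq' : ∀ i, p' i ≤ q' i := fun i =>
      le_trans (Finset.inf'_le _ hpS) (Finset.le_sup' (fun x => F x i) hpS)
    have hTinv : ∀ x : Fin v → ℤ, (∀ i, p' i ≤ x i ∧ x i ≤ q' i) →
        ∀ i, p' i ≤ F x i ∧ F x i ≤ q' i := by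
      intro x hx
      have hxS : x ∈ Finset.Icc p q := (hmemS x).mpr
        (fun i => ⟨le_trans (hpL i) (hx i).1, le_trans (hx i).2 (hqU i)⟩)
      exact fun i => ⟨Finset.inf'_le _ hxS, Finset.le_sup' (fun z => F z i) hxS⟩
    by_cases hB : ∀ i, p' i = p i ∧ q' i = q i
    · -- the cover of the image is the whole box: use Chebyshev-radius shrinking
      set d : ℕ := Finset.univ.sup (fun i => (q i - p i).toNat) with hd
      have hid : ∀ i, (q i - p i).toNat ≤ d := fun i => by
        rw [hd]; exact Finset.le_sup (f := fun i => (q i - p i).toNat) (Finset.mem_univ i)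
      have hd2 : 2 ≤ d := le_trans (show 2 ≤ (q i₀ - p i₀).toNat by omega) (hid i₀)
      set r : ℕ := (d + 1) / 2 with hr
      have hrd : r < d := by omega
      have hdr : d ≤ 2 * r := by omega
      have hw2r : ∀ i, q i - p i ≤ 2 * (r : ℤ) := by
        intro i; have h1 := hid i; have h2 := hpq i; omega
      set p'' : Fin v → ℤ := fun i => max (p i) (q i - (r : ℤ)) with hp''
      set q'' : Fin v → ℤ := fun i => min (q i) (p i + (r : ℤ)) with hq''
      have hbox'' : ∀ i, p'' i ≤ q'' i := by
        intro i
        have h1 := hpq i; have h2 := hw2r i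
        simp only [hp'', hq'']
        refine max_le (le_min h1 (by omega)) (le_min (by omega) (by omega))
      have hsub1 : ∀ i, p i ≤ p'' i := fun i => le_max_left _ _
      have hsub2 : ∀ i, q'' i ≤ q i := fun i => min_le_left _ _
      have hxyr : ∀ x : Fin v → ℤ, (∀ i, p'' i ≤ x i ∧ x i ≤ q'' i) →
          ∀ y ∈ Finset.Icc p q, ∀ j, |x j - y j| ≤ (r : ℤ) := by
        intro x hx y hy j
        have h1 := (hmemS y).mp hy j
        have h2 := hx j
        have h3 : q j - (r : ℤ) ≤ x j := le_trans (le_max_right _ _) h2.1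
        have h4 : x j ≤ p j + (r : ℤ) := le_trans h2.2 (min_le_right _ _)
        rw [abs_le]; omega
      have hSinv'' : ∀ x : Fin v → ℤ, (∀ i, p'' i ≤ x i ∧ x i ≤ q'' i) →
          ∀ i, p'' i ≤ F x i ∧ F x i ≤ q'' i := by
        intro x hx i
        have hxpq : ∀ j, p j ≤ x j ∧ x j ≤ q j := fun j =>
          ⟨le_trans (hsub1 j) (hx j).1, le_trans (hx j).2 (hsub2 j)⟩
        have hxB : ∀ j, a j ≤ x j ∧ x j ≤ b j := fun j =>
          ⟨le_trans (hap j) (hxpq j).1, le_trans (hxpq j).2 (hqb j)⟩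
        have hF := hinv x hxpq i
        obtain ⟨ys, hysS, hys⟩ := Finset.exists_mem_eq_sup' hSne (fun z => F z i)
        have hysB : ∀ j, a j ≤ ys j ∧ ys j ≤ b j := by
          intro j; have := (hmemS ys).mp hysS j
          exact ⟨le_trans (hap j) this.1, le_trans this.2 (hqb j)⟩
        have hds := hne r x ys hxB hysB (hxyr x hx ys hysS) i
        have hqi : q i = F ys i := by
          rw [← (hB i).2, hq']; exact hys
        obtain ⟨yi, hyiS, hyi⟩ := Finset.exists_mem_eq_inf' hSne (fun z => F z i)
        have hyiB : ∀ j, a j ≤ yi j ∧ yi j ≤ b j := by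
          intro j; have := (hmemS yi).mp hyiS j
          exact ⟨le_trans (hap j) this.1, le_trans this.2 (hqb j)⟩
        have hdi := hne r x yi hxB hyiB (hxyr x hx yi hyiS) i
        have hpi : p i = F yi i := by
          rw [← (hB i).1, hp']; exact hyi
        rw [abs_le] at hds hdi
        constructor
        · exact max_le hF.1 (by omega)
        · exact le_min hF.2 (by omega)
      obtain ⟨i₁, -, hi₁⟩ := Finset.exists_mem_eq_sup Finset.univ
        ⟨i₀, Finset.mem_univ i₀⟩ (fun i => (q i - p i).toNat)
      have hsum'' : ∑ i, (q'' i - p'' i).toNat ≤ n := by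
        have hlt : ∑ i, (q'' i - p'' i).toNat < ∑ i, (q i - p i).toNat := by
          apply Finset.sum_lt_sum
          · intro i _
            exact Int.toNat_le_toNat (sub_le_sub (hsub2 i) (hsub1 i))
          · refine ⟨i₁, Finset.mem_univ _, ?_⟩
            have h1 : q'' i₁ - p'' i₁ ≤ (p i₁ + (r : ℤ)) - (q i₁ - (r : ℤ)) :=
              sub_le_sub (min_le_right _ _) (le_max_right _ _)
            have h2 : (q i₁ - p i₁).toNat = d := by rw [hd]; exact hi₁.symm
            have h3 := hpq i₁
            have h4 := hbox'' i₁
            omega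
        omega
      obtain ⟨x, hx1, hx2⟩ := ih p'' q''
        (fun i => le_trans (hap i) (hsub1 i)) hbox''
        (fun i => le_trans (hsub2 i) (hqb i)) hsum'' hSinv''
      exact ⟨x, fun i => ⟨le_trans (hsub1 i) (hx1 i).1, le_trans (hx1 i).2 (hsub2 i)⟩, hx2⟩
    · -- the cover of the image is strictly smaller: recurse on it
      push_neg at hB
      have hsum' : ∑ i, (q' i - p' i).toNat ≤ n := by
        have hlt : ∑ i, (q' i - p' i).toNat < ∑ i, (q i - p i).toNat := by
          apply Finset.sum_lt_sum
          · intro i _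
            have h1 := hpL i; have h2 := hqU i; have h3 := hpq' i
            omega
          · obtain ⟨i₁, h₁⟩ := hB
            refine ⟨i₁, Finset.mem_univ _, ?_⟩
            have h1 := hpL i₁; have h2 := hqU i₁; have h3 := hpq' i₁
            have h4 : p' i₁ ≠ p i₁ ∨ q' i₁ ≠ q i₁ := by tauto
            omega
        omega
      obtain ⟨x, hx1, hx2⟩ := ih p' q'
        (fun i => le_trans (hap i) (hpL i)) hpq'
        (fun i => le_trans (hqU i) (hqb i)) hsum' hTinv
      exact ⟨x, fun i => ⟨le_trans (hpL i) (hx1 i).1, le_trans (hx1 i).2 (hqU i)⟩, hx2⟩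

/-- `(∏_{i=1}^v [a_i,b_i]_ℤ, c_v)` has the AFPP. -/
theorem afpp_box (v : ℕ) (hv : 0 < v)
    (a b : Fin v → ℤ) (hab : ∀ i, a i ≤ b i) :
    HasAFPP (fun p q : {y : Fin v → ℤ // ∀ i, y i ∈ Set.Icc (a i) (b i)} =>
      cAdj v p.val q.val) := by
  intro f hf
  classical
  set F : (Fin v → ℤ) → (Fin v → ℤ) := fun x =>
    if h : ∀ i, x i ∈ Set.Icc (a i) (b i) then (f ⟨x, h⟩).val else x with hF
  have hFval : ∀ (x : Fin v → ℤ) (h : ∀ i, x i ∈ Set.Icc (a i) (b i)),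
      F x = (f ⟨x, h⟩).val := by
    intro x h; simp only [hF]; rw [dif_pos h]
  have hstep : ∀ x y : Fin v → ℤ, (∀ i, a i ≤ x i ∧ x i ≤ b i) →
      (∀ i, a i ≤ y i ∧ y i ≤ b i) →
      (∀ i, |x i - y i| ≤ 1) → ∀ i, |F x i - F y i| ≤ 1 := by
    intro x y hx hy hd
    have hx' : ∀ i, x i ∈ Set.Icc (a i) (b i) := fun i => ⟨(hx i).1, (hx i).2⟩
    have hy' : ∀ i, y i ∈ Set.Icc (a i) (b i) := fun i => ⟨(hy i).1, (hy i).2⟩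
    by_cases hxy : x = y
    · subst hxy; intro i; simp
    · have hadj : cAdj v x y :=
        ⟨hxy, hd, le_trans (Finset.card_filter_le _ _) (by simp)⟩
      have hcont := hf ⟨x, hx'⟩ ⟨y, hy'⟩ hadj
      rw [hFval x hx', hFval y hy']
      rcases hcont with h | h
      · intro i; rw [h]; simp
      · exact fun i => h.2.1 i
  have hne := nonexp v a b F hstep
  have hinv : ∀ x : Fin v → ℤ, (∀ i, a i ≤ x i ∧ x i ≤ b i) →
      ∀ i, a i ≤ F x i ∧ F x i ≤ b i := by
    intro x hx i
    have hx' : ∀ i, x i ∈ Set.Icc (a i) (b i) := fun i => ⟨(hx i).1, (hx i).2⟩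
    rw [hFval x hx']
    exact ⟨((f ⟨x, hx'⟩).property i).1, ((f ⟨x, hx'⟩).property i).2⟩
  obtain ⟨x, hx1, hx2⟩ := descent v a b F hne (∑ i, (b i - a i).toNat) a b
    (fun i => le_rfl) hab (fun i => le_rfl) le_rfl hinv
  have hx' : ∀ i, x i ∈ Set.Icc (a i) (b i) := fun i => ⟨(hx1 i).1, (hx1 i).2⟩
  refine ⟨⟨x, hx'⟩, ?_⟩
  by_cases hfx : f ⟨x, hx'⟩ = ⟨x, hx'⟩
  · exact Or.inl hfx
  · refine Or.inr ⟨fun h => hfx (Subtype.ext h), ?_, ?_⟩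
    · intro i
      have := hx2 i
      rw [hFval x hx'] at this
      exact this
    · exact le_trans (Finset.card_filter_le _ _) (by simp)
end

section
/- Let v be a positive integer, let X = [−1,1]_ℤ^v ⊆ ℤ^v, and let 1 ≤ u ≤ v. Then (X,c_u) has the approximate fixed point property if and only if u = v. -/
lemma key_ne (a : ℤ) (h1 : -1 ≤ a) (h2 : a ≤ 1) : 1 - |a| ≠ a := by
  interval_cases a <;> decide

lemma key_abs (a b : ℤ) (h : |a - b| ≤ 1) : |(1 - |a|) - (1 - |b|)| ≤ 1 := by
  have he : (1 - |a|) - (1 - |b|) = -(|a| - |b|) := by ring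
  rw [he, abs_neg]
  exact le_trans (abs_abs_sub_abs_le_abs_sub a b) h

/-- For `X = [-1,1]_ℤ^v` and `1 ≤ u ≤ v`,
`(X, c_u)` has the AFPP iff `u = v`. -/
theorem afpp_pm_one_cube_iff (v : ℕ) (hv : 0 < v) (u : ℕ) (hu : 1 ≤ u) (huv : u ≤ v) :
    HasAFPP (fun p q : {x : Fin v → ℤ // ∀ i, x i ∈ Set.Icc (-1 : ℤ) 1} =>
      cAdj u p.val q.val) ↔ u = v := by
  constructor
  · intro h
    by_contra hne
    have hlt : u < v := lt_of_le_of_ne huv hne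
    -- the map x_i ↦ 1 - |x_i|
    set f : {x : Fin v → ℤ // ∀ i, x i ∈ Set.Icc (-1 : ℤ) 1} →
        {x : Fin v → ℤ // ∀ i, x i ∈ Set.Icc (-1 : ℤ) 1} :=
      fun x => ⟨fun i => 1 - |x.val i|, fun i => by
        have h1 := (x.2 i).1
        have h2 := (x.2 i).2
        have hb : |x.val i| ≤ 1 := abs_le.mpr ⟨h1, h2⟩
        have hnn : 0 ≤ |x.val i| := abs_nonneg _
        show (1:ℤ) - |x.val i| ∈ Set.Icc (-1 : ℤ) 1
        exact ⟨by omega, by omega⟩⟩ with hf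
    have hcont : DigContinuous (fun p q => cAdj u p.val q.val)
        (fun p q => cAdj u p.val q.val) f := by
      intro x y hxy
      obtain ⟨hne', habs, hcard⟩ := hxy
      by_cases heq : f x = f y
      · exact Or.inl heq
      · refine Or.inr ⟨?_, ?_, ?_⟩
        · intro hval
          exact heq (Subtype.ext hval)
        · intro i
          exact key_abs _ _ (habs i)
        · refine le_trans (Finset.card_le_card ?_) hcard
          intro i hi
          simp only [Finset.mem_filter, Finset.mem_univ, true_and] at hi ⊢
          intro hxyi
          apply hi
          simp [hf, hxyi]
    obtain ⟨x, hx⟩ := h f hcont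
    -- but f moves every point in all v coordinates
    have hallne : ∀ i, (f x).val i ≠ x.val i := by
      intro i
      exact key_ne _ (x.2 i).1 (x.2 i).2
    rcases hx with hx | hx
    · exact hallne ⟨0, hv⟩ (by rw [hx])
    · obtain ⟨_, _, hcard⟩ := hx
      have : (Finset.univ.filter (fun i => (f x).val i ≠ x.val i)) = Finset.univ := by
        ext i; simp [hallne i]
      rw [this, Finset.card_univ, Fintype.card_fin] at hcard
      omega
  · intro huv' f hf
    refine ⟨⟨fun _ => 0, fun i => by simp⟩, ?_⟩
    set x0 : {x : Fin v → ℤ // ∀ i, x i ∈ Set.Icc (-1 : ℤ) 1} :=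
      ⟨fun _ => 0, fun i => by simp⟩ with hx0
    by_cases heq : f x0 = x0
    · exact Or.inl heq
    · refine Or.inr ⟨?_, ?_, ?_⟩
      · intro hval
        exact heq (Subtype.ext hval)
      · intro i
        have h1 := ((f x0).2 i).1
        have h2 := ((f x0).2 i).2
        have : x0.val i = 0 := rfl
        rw [this]
        simpa using abs_le.mpr ⟨h1, h2⟩
      · calc (Finset.univ.filter (fun i => (f x0).val i ≠ x0.val i)).card
            ≤ Finset.univ.card := Finset.card_filter_le _ _
          _ = v := by simp
          _ = u := huv'.symm ▸ rfl
end

section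
/- Let a ≤ b be integers. Then the digital interval ([a,b]_ℤ, c₁) has the approximate fixed point property: for every function f : [a,b]_ℤ → [a,b]_ℤ such that |s − t| = 1 implies |f(s) − f(t)| ≤ 1, there exists t ∈ [a,b]_ℤ with |f(t) − t| ≤ 1. -/
/-! The displacement `t ↦ f t - t` is `≥ -1` at `a`, `≤ 1` at `b`, and drops by at most `2` per
step, since `f` moves by at most `1` and the identity by exactly `1`. Leaving the window `[-1, 1]`
downwards would need a drop of at least `3`, so by a discrete intermediate value argument the
displacement lies in that window somewhere. -/
theorem Int.exists_mem_Icc_apply_mem_Icc_of_sub_succ_le {u : ℤ → ℤ} {a b lo hi : ℤ}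
    (hab : a ≤ b) (ha : lo ≤ u a) (hb : u b ≤ hi)
    (hdrop : ∀ t ∈ Set.Ico a b, u t - u (t + 1) ≤ hi - lo + 1) :
    ∃ t ∈ Set.Icc a b, u t ∈ Set.Icc lo hi := by
  induction b, hab using Int.leInduction with
  | base => exact ⟨a, Set.left_mem_Icc.2 le_rfl, ha, hb⟩
  | succ b hab ih =>
    by_cases hb' : u b ≤ hi
    · obtain ⟨t, ht, hut⟩ := ih hb' fun t ht => hdrop t ⟨ht.1, ht.2.trans (lt_add_one b)⟩
      exact ⟨t, ⟨ht.1, ht.2.trans (lt_add_one b).le⟩, hut⟩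
    · have := hdrop b ⟨hab, lt_add_one b⟩
      exact ⟨b + 1, ⟨by omega, le_rfl⟩, by omega, hb⟩

/-- The digital interval `([a,b]_ℤ, c₁)` has the AFPP. -/
theorem afpp_interval (a b : ℤ) (hab : a ≤ b)
    (f : Set.Icc a b → Set.Icc a b)
    (hf : ∀ s t : Set.Icc a b, |(s : ℤ) - (t : ℤ)| = 1 → |(f s : ℤ) - (f t : ℤ)| ≤ 1) :
    ∃ t : Set.Icc a b, |(f t : ℤ) - (t : ℤ)| ≤ 1 := by
  set u : ℤ → ℤ := fun t => (f (Set.projIcc a b hab t) : ℤ) - t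
  have hu : ∀ t (ht : t ∈ Set.Icc a b), u t = (f ⟨t, ht⟩ : ℤ) - t := fun t ht => by
    simp only [u, Set.projIcc_of_mem hab ht]
  have ha : -1 ≤ u a := by
    have := (f ⟨a, Set.left_mem_Icc.2 hab⟩).2.1
    rw [hu a (Set.left_mem_Icc.2 hab)]; omega
  have hb : u b ≤ 1 := by
    have := (f ⟨b, Set.right_mem_Icc.2 hab⟩).2.2
    rw [hu b (Set.right_mem_Icc.2 hab)]; omega
  have hdrop : ∀ t ∈ Set.Ico a b, u t - u (t + 1) ≤ 2 := by
    intro t ⟨hat, htb⟩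
    have ht : t ∈ Set.Icc a b := ⟨hat, htb.le⟩
    have ht1 : t + 1 ∈ Set.Icc a b := ⟨by omega, by omega⟩
    have := (abs_le.1 (hf ⟨t, ht⟩ ⟨t + 1, ht1⟩ (by simp))).2
    rw [hu t ht, hu (t + 1) ht1]; omega
  obtain ⟨t, ht, hut⟩ := Int.exists_mem_Icc_apply_mem_Icc_of_sub_succ_le hab ha hb
    fun t ht => (hdrop t ht).trans (by norm_num)
  exact ⟨⟨t, ht⟩, abs_le.2 (hu t ht ▸ hut)⟩
end

section
/- Let (X,κ) be a digital image and let Y ⊆ X be a κ-retract of X, i.e., there is a κ-continuous map r : X → Y with r(y) = y for all y ∈ Y. If (X,κ) has the approximate fixed point property, then (Y,κ) has the approximate fixed point property. -/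
/-- A κ-retract of a digital image with the AFPP has the AFPP. -/
theorem afpp_of_retract {X : Type*} (kappa : X → X → Prop)
    (hirr : Irreflexive kappa) (hsym : Symmetric kappa)
    (Y : Set X) (r : X → X)
    (hr_cont : DigContinuous kappa kappa r)
    (hr_into : ∀ x, r x ∈ Y)
    (hr_retr : ∀ y ∈ Y, r y = y)
    (hX : HasAFPP kappa) :
    HasAFPP (fun p q : Y => kappa p.val q.val) := by
  intro f hf
  set g : X → X := fun x => (f ⟨r x, hr_into x⟩).val with hg
  have hg_cont : DigContinuous kappa kappa g := by
    intro x x' hxx'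
    rcases hr_cont x x' hxx' with h | h
    · left
      show (f ⟨r x, hr_into x⟩).val = (f ⟨r x', hr_into x'⟩).val
      congr 2
      exact Subtype.ext h
    · rcases hf ⟨r x, hr_into x⟩ ⟨r x', hr_into x'⟩ h with h2 | h2
      · exact Or.inl (congrArg Subtype.val h2)
      · exact Or.inr h2
  obtain ⟨x, hx⟩ := hX g hg_cont
  rcases hx with hx | hx
  · -- g x = x, so x ∈ Y and f ⟨x⟩ = ⟨x⟩
    have hxY : x ∈ Y := hx ▸ (f ⟨r x, hr_into x⟩).2
    refine ⟨⟨x, hxY⟩, Or.inl ?_⟩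
    have hrx : r x = x := hr_retr x hxY
    apply Subtype.ext
    have : (⟨r x, hr_into x⟩ : Y) = ⟨x, hxY⟩ := Subtype.ext hrx
    calc (f ⟨x, hxY⟩).val = (f ⟨r x, hr_into x⟩).val := by rw [this]
      _ = x := hx
  · -- kappa (g x) x
    refine ⟨⟨r x, hr_into x⟩, ?_⟩
    have hgY : g x ∈ Y := (f ⟨r x, hr_into x⟩).2
    have hrg : r (g x) = g x := hr_retr _ hgY
    have key : g x = (f ⟨r x, hr_into x⟩).val := rfl
    rcases hr_cont (g x) x hx with h | h
    · left; exact Subtype.ext (by rw [← key, ← hrg, h])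
    · right; show kappa (f ⟨r x, hr_into x⟩).val (r x)
      rw [← key, ← hrg]; exact h
end
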